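/- arXiv:1607.06160 — 4 statements merged into one kernel-verified Lean document; each statement's English description precedes it below -/
import Mathlib

section
/- Let X, Y be metric spaces with ψ : X → Y continuous, ψ⁻¹({c}) nonempty with connected components {X_j}_{j∈J}. If the component X₀ has a locally finite neighborhood V, then there exist disjoint open subsets A, B of X with X₀ ⊆ A ⊆ V and ⋃_{j≠0} X_j ⊆ B. -/
/-!
The components of `ψ⁻¹{c}` are closed, so the finitely many components other than `X₀` that
meet `V`, together with the part of `ψ⁻¹{c}` outside `V`, form a closed set disjoint from the
closed set `X₀` and containing every other component. Normality of `X` separates the two closed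
sets, and intersecting the neighbourhood of `X₀` with `V` gives `A`.
-/

open Set

section

variable {X : Type*} [TopologicalSpace X]

theorem IsClosed.connectedComponentIn {F : Set X} (hF : IsClosed F) (x : X) :
    IsClosed (connectedComponentIn F x) := by
  by_cases hx : x ∈ F
  · rw [connectedComponentIn_eq_image hx]
    exact hF.isClosedEmbedding_subtypeVal.isClosedMap _ isClosed_connectedComponent
  · rw [connectedComponentIn_eq_empty hx]
    exact isClosed_empty

theorem disjoint_connectedComponentIn_of_ne {F : Set X} {x y : X}
    (h : connectedComponentIn F x ≠ connectedComponentIn F y) :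
    Disjoint (connectedComponentIn F x) (connectedComponentIn F y) :=
  disjoint_left.2 fun _ hx hy =>
    h ((connectedComponentIn_eq hx).trans (connectedComponentIn_eq hy).symm)

theorem exists_isOpen_subset_disjoint_of_isClosed [NormalSpace X] {K L V : Set X}
    (hK : IsClosed K) (hL : IsClosed L) (hV : IsOpen V) (hKV : K ⊆ V) (hKL : Disjoint K L) :
    ∃ A B : Set X, IsOpen A ∧ IsOpen B ∧ Disjoint A B ∧ K ⊆ A ∧ A ⊆ V ∧ L ⊆ B := by
  obtain ⟨U, W, hU, hW, hKU, hLW, hUW⟩ := normal_separation hK hL hKL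
  exact ⟨U ∩ V, W, hU.inter hV, hW, hUW.mono_left inter_subset_left, subset_inter hKU hKV,
    inter_subset_right, hLW⟩

theorem exists_isClosed_disjoint_connectedComponentIn {S V : Set X} {x₀ : X}
    (hS : IsClosed S) (hV : IsOpen V) (hX₀V : connectedComponentIn S x₀ ⊆ V)
    (hfin : {C : Set X | (∃ x ∈ S, C = connectedComponentIn S x) ∧ (C ∩ V).Nonempty}.Finite) :
    ∃ L : Set X, IsClosed L ∧ Disjoint (connectedComponentIn S x₀) L ∧
      S \ connectedComponentIn S x₀ ⊆ L := by
  set X₀ := connectedComponentIn S x₀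
  set 𝒞 := {C : Set X | (∃ x ∈ S, C = connectedComponentIn S x) ∧ (C ∩ V).Nonempty} \ {X₀}
  refine ⟨⋃₀ 𝒞 ∪ S \ V, ?closed, ?disjoint, ?covers⟩
  case closed =>
    refine .union ?_ (hS.sdiff hV)
    rw [sUnion_eq_biUnion]
    refine hfin.sdiff.isClosed_biUnion ?_
    rintro C ⟨⟨⟨x, -, rfl⟩, -⟩, -⟩
    exact hS.connectedComponentIn x
  case disjoint =>
    refine disjoint_union_right.2 ⟨disjoint_sUnion_right.2 ?_, disjoint_sdiff_right.mono_left hX₀V⟩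
    rintro C ⟨⟨⟨x, -, rfl⟩, -⟩, hC⟩
    exact disjoint_connectedComponentIn_of_ne (Ne.symm hC)
  case covers =>
    rintro x ⟨hxS, hxX₀⟩
    by_cases hxV : x ∈ V
    · have hx := mem_connectedComponentIn hxS
      refine Or.inl ⟨connectedComponentIn S x, ⟨⟨⟨x, hxS, rfl⟩, x, hx, hxV⟩, ?_⟩, hx⟩
      exact fun h => hxX₀ (h ▸ hx)
    · exact Or.inr ⟨hxS, hxV⟩

end

theorem stmt_8_general {X Y : Type*} [MetricSpace X] [MetricSpace Y]
    (ψ : X → Y) (hψ : Continuous ψ) (c : Y) (x₀ : X)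
    (V : Set X) (hVopen : IsOpen V)
    (hX₀V : connectedComponentIn (ψ ⁻¹' {c}) x₀ ⊆ V)
    (hLFN : {C : Set X | (∃ x ∈ ψ ⁻¹' {c}, C = connectedComponentIn (ψ ⁻¹' {c}) x) ∧
      (C ∩ V).Nonempty}.Finite) :
    ∃ A B : Set X, IsOpen A ∧ IsOpen B ∧ Disjoint A B ∧
      connectedComponentIn (ψ ⁻¹' {c}) x₀ ⊆ A ∧ A ⊆ V ∧
      (ψ ⁻¹' {c}) \ connectedComponentIn (ψ ⁻¹' {c}) x₀ ⊆ B := by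
  have hS : IsClosed (ψ ⁻¹' {c}) := isClosed_singleton.preimage hψ
  obtain ⟨L, hL, hX₀L, hcovers⟩ :=
    exists_isClosed_disjoint_connectedComponentIn hS hVopen hX₀V hLFN
  obtain ⟨A, B, hA, hB, hAB, hX₀A, hAV, hLB⟩ :=
    exists_isOpen_subset_disjoint_of_isClosed (hS.connectedComponentIn x₀) hL hVopen hX₀V hX₀L
  exact ⟨A, B, hA, hB, hAB, hX₀A, hAV, hcovers.trans hLB⟩

/-- Let `X, Y` be metric spaces, `ψ : X → Y` continuous, `ψ⁻¹({c})` nonempty with connected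
components `X_j`.  If the component `X₀` (containing `x₀`) has a locally finite neighborhood
`V`, then there exist disjoint open subsets `A, B` of `X` with `X₀ ⊆ A ⊆ V` and
`⋃_{j ≠ 0} X_j ⊆ B`. -/
theorem stmt_8 {X Y : Type*} [MetricSpace X] [MetricSpace Y]
    (ψ : X → Y) (hψ : Continuous ψ) (c : Y) (x₀ : X) (hx₀ : ψ x₀ = c)
    (V : Set X) (hVopen : IsOpen V)
    (hX₀V : connectedComponentIn (ψ ⁻¹' {c}) x₀ ⊆ V)
    (hLFN : {C : Set X | (∃ x ∈ ψ ⁻¹' {c}, C = connectedComponentIn (ψ ⁻¹' {c}) x) ∧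
      (C ∩ V).Nonempty}.Finite) :
    ∃ A B : Set X, IsOpen A ∧ IsOpen B ∧ Disjoint A B ∧
      connectedComponentIn (ψ ⁻¹' {c}) x₀ ⊆ A ∧ A ⊆ V ∧
      (ψ ⁻¹' {c}) \ connectedComponentIn (ψ ⁻¹' {c}) x₀ ⊆ B :=
  stmt_8_general ψ hψ c x₀ V hVopen hX₀V hLFN
end

section
/- Suppose ψ : U → ℝᵐ is continuously differentiable on an open set U ⊆ ℝⁿ and Λ : U → ℝ^{m×n} satisfies the multiplier relation Λ(x(t))(ẋ(t) − f(x(t))) = d/dt ψ(x(t)) for all C¹ curves x : I → U. Then for all y ∈ U, the Jacobian J_ψ(y) = Λ(y) and Λ(y) f(y) = 0. -/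
/-!
Testing the multiplier relation on the straight line `s ↦ y + s • v` identifies the directional
derivative of `ψ` at `y` in direction `v` with `Λ y (v - f y)`, for every `v`. Taking `v = 0`
gives `Λ y (f y) = 0`, and then `J_ψ(y) v = Λ y v` for all `v`.
-/

theorem ContinuousLinearMap.eq_and_apply_eq_zero_of_forall_apply_eq_apply_sub
    {R M N : Type*} [Ring R] [TopologicalSpace M] [AddCommGroup M] [Module R M]
    [TopologicalSpace N] [AddCommGroup N] [Module R N] {A B : M →L[R] N} {w : M}
    (h : ∀ v, A v = B (v - w)) : A = B ∧ B w = 0 := by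
  have hBw : B w = 0 := by simpa using (h 0).symm
  refine ⟨ContinuousLinearMap.ext fun v => ?_, hBw⟩
  rw [h v, map_sub, hBw, sub_zero]

theorem hasDerivAt_add_smul_const {𝕜 E : Type*} [NontriviallyNormedField 𝕜]
    [NormedAddCommGroup E] [NormedSpace 𝕜 E] (y v : E) (t : 𝕜) :
    HasDerivAt (fun s : 𝕜 => y + s • v) v t := by
  simpa using ((hasDerivAt_id t).smul_const v).const_add y

theorem stmt_14_general {n m : ℕ}
    (U : Set (EuclideanSpace ℝ (Fin n))) (hU : IsOpen U)
    (f : EuclideanSpace ℝ (Fin n) → EuclideanSpace ℝ (Fin n))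
    (ψ : EuclideanSpace ℝ (Fin n) → EuclideanSpace ℝ (Fin m))
    (hψ : ContDiffOn ℝ 1 ψ U)
    (Λ : EuclideanSpace ℝ (Fin n) →
      (EuclideanSpace ℝ (Fin n) →L[ℝ] EuclideanSpace ℝ (Fin m)))
    (hmult : ∀ (x : ℝ → EuclideanSpace ℝ (Fin n)) (v : EuclideanSpace ℝ (Fin n)) (t : ℝ),
      x t ∈ U → HasDerivAt x v t →
      HasDerivAt (fun s => ψ (x s)) (Λ (x t) (v - f (x t))) t) :
    ∀ y ∈ U, fderiv ℝ ψ y = Λ y ∧ Λ y (f y) = 0 := by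
  intro y hy
  have hdiff : DifferentiableAt ℝ ψ y :=
    (hψ.differentiableOn one_ne_zero).differentiableAt (hU.mem_nhds hy)
  have hline : ∀ v, HasLineDerivAt ℝ ψ (Λ y (v - f y)) y v := fun v => by
    simpa [HasLineDerivAt] using
      hmult (fun s => y + s • v) v 0 (by simpa using hy) (hasDerivAt_add_smul_const y v 0)
  exact ContinuousLinearMap.eq_and_apply_eq_zero_of_forall_apply_eq_apply_sub fun v =>
    (hdiff.hasFDerivAt.hasLineDerivAt v).unique (hline v)

/-- If `ψ` is continuously differentiable on an open `U ⊆ ℝⁿ` and the multiplier `Λ`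
satisfies `Λ(x(t))(ẋ(t) − f(x(t))) = d/dt ψ(x(t))` for all C¹ curves valued in `U`, then
for all `y ∈ U`, the Jacobian `J_ψ(y) = Λ(y)` and `Λ(y) f(y) = 0`. -/
theorem stmt_14 {n m : ℕ}
    (U : Set (EuclideanSpace ℝ (Fin n))) (hU : IsOpen U)
    (f : EuclideanSpace ℝ (Fin n) → EuclideanSpace ℝ (Fin n)) (hf : ContinuousOn f U)
    (ψ : EuclideanSpace ℝ (Fin n) → EuclideanSpace ℝ (Fin m))
    (hψ : ContDiffOn ℝ 1 ψ U)
    (Λ : EuclideanSpace ℝ (Fin n) →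
      (EuclideanSpace ℝ (Fin n) →L[ℝ] EuclideanSpace ℝ (Fin m)))
    (hΛ : ContinuousOn Λ U)
    (hmult : ∀ (x : ℝ → EuclideanSpace ℝ (Fin n)) (v : EuclideanSpace ℝ (Fin n)) (t : ℝ),
      x t ∈ U → HasDerivAt x v t →
      HasDerivAt (fun s => ψ (x s)) (Λ (x t) (v - f (x t))) t) :
    ∀ y ∈ U, fderiv ℝ ψ y = Λ y ∧ Λ y (f y) = 0 :=
  stmt_14_general U hU f ψ hψ Λ hmult
end

section
/- For the discretization x_k − x_{k−1} = τ(y_{k−1} + y_k), y_k − y_{k−1} = τ(x_{k−1}² + x_{k−1}x_k + x_k² + a), the discrete quantity ψ(x,y) = y² − x³ − ax is exactly conserved: y_k² − x_k³ − a x_k = y_{k−1}² − x_{k−1}³ − a x_{k−1} for all k. -/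
/-- For the discretization `x_{k+1} − x_k = τ(y_k + y_{k+1})`,
`y_{k+1} − y_k = τ(x_k² + x_k x_{k+1} + x_{k+1}² + a)`, the discrete quantity
`ψ(x,y) = y² − x³ − ax` is exactly conserved. -/
theorem stmt_17 (a τ : ℝ) (hτ : 0 < τ) (x y : ℕ → ℝ)
    (h1 : ∀ k : ℕ, x (k + 1) - x k = τ * (y k + y (k + 1)))
    (h2 : ∀ k : ℕ, y (k + 1) - y k = τ * (x k ^ 2 + x k * x (k + 1) + x (k + 1) ^ 2 + a)) :
    ∀ k : ℕ, y (k + 1) ^ 2 - x (k + 1) ^ 3 - a * x (k + 1)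
      = y k ^ 2 - x k ^ 3 - a * x k := by
  intro k
  have e1 := h1 k
  have e2 := h2 k
  linear_combination (y k + y (k+1)) * e2 - (x k ^ 2 + x k * x (k+1) + x (k+1) ^ 2 + a) * e1
end

section
/- Let Λ^τ : ℝ^{nμ} → ℝ^{m×n} and D_t^τ x, f^τ be discretizations satisfying the discrete product rule (ψ^τ(x_k,…) − ψ^τ(x_{k−1},…))/τ = Λ^τ(x_k,…) D_t^τ x_k and the discrete orthogonality Λ^τ(x_k,…) f^τ(x_k,…) = 0 at every step k. Then any solution sequence of the discretization D_t^τ x − f^τ = 0 satisfies exact conservation: ψ^τ(x_k,…) = ψ^τ(x_{k−1},…) for all k ≥ 1, hence ψ^τ(x_k,…) = ψ^τ(x_{μ−1},…,x_0) for all k. -/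
/-- If the discretizations satisfy the discrete product rule
`(ψ^τ(step k+1) − ψ^τ(step k))/τ = Λ^τ_k (D_t^τ x)_k` and the discrete orthogonality
`Λ^τ_k f^τ_k = 0` at every step, then any solution sequence of the scheme
`D_t^τ x − f^τ = 0` satisfies exact conservation: `ψ^τ(step k) = ψ^τ(step 0)` for all `k`,
i.e. `ψ^τ(x_k,…) = ψ^τ(x_{μ−1},…,x_0)`. -/
theorem stmt_18 {n m μ : ℕ} (hμ : 1 ≤ μ) (τ : ℝ) (hτ : 0 < τ)
    (x : ℕ → EuclideanSpace ℝ (Fin n))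
    (ψτ : (Fin μ → EuclideanSpace ℝ (Fin n)) → EuclideanSpace ℝ (Fin m))
    (Λτ : ℕ → (EuclideanSpace ℝ (Fin n) →L[ℝ] EuclideanSpace ℝ (Fin m)))
    (D fτ : ℕ → EuclideanSpace ℝ (Fin n))
    (Ψ : ℕ → EuclideanSpace ℝ (Fin m))
    (hΨ : ∀ k : ℕ, Ψ k = ψτ (fun i : Fin μ => x (k + (μ - 1) - (i : ℕ))))
    (hrule : ∀ k : ℕ, Ψ (k + 1) - Ψ k = τ • Λτ k (D k))
    (horth : ∀ k : ℕ, Λτ k (fτ k) = 0)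
    (hscheme : ∀ k : ℕ, D k - fτ k = 0) :
    ∀ k : ℕ, Ψ k = Ψ 0 := by
  intro k
  induction k with
  | zero => rfl
  | succ k ih =>
    have hD : D k = fτ k := by have := hscheme k; rwa [sub_eq_zero] at this
    have h := hrule k
    rw [hD, horth k, smul_zero, sub_eq_zero] at h
    rw [h, ih]
end
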